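/- Let n = 2r+1 be odd and let q, p : ℝ×ℝ → ℂⁿ be twice continuously differentiable (q = q(x,t), p = p(x,t)). Define the (n+2)×(n+2) matrix-valued functions in (1,n,1) block form: Q = [[0, qᵀ, 0], [p, 0ₙ, s₀q], [0, pᵀs₀, 0]], A = [[0, qᵀ, 0], [−p, 0ₙ, s₀q], [0, −pᵀs₀, 0]] (so that [J, A] = Q for J = diag(1, 0, …, 0, −1)), V₁ = Q, and V₀ = i·∂ₓA + (1/2)(A·Q − Q·A). Then the zero-curvature equation i·∂ₓ(V₀ + λV₁) − i·∂ₜQ + [Q − λJ, V₀ + λV₁ − λ²J] = 0 holds for all λ ∈ ℂ and all (x,t) if and only if q and p satisfy the multi-component nonlinear Schrödinger system i·∂ₜq + ∂ₓ²q + 2(q,p)·q − (q, s₀q)·s₀p = 0 and i·∂ₜp − ∂ₓ²p − 2(q,p)·p + (p, s₀p)·s₀q = 0, where (u,v) = Σᵢ uᵢvᵢ is the standard bilinear pairing on ℂⁿ and [X,Y] = XY − YX. -/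

import Mathlib

/-!
Write `Q = E + F` and `A = E - F`, where `E` (built from `q`) sits above the diagonal blocks
and `F` (built from `p`) below them. Then `[J, A] = Q` and `[J, Q] = A`, so by the Jacobi identity
`[J, V₀] = i ∂ₓQ`, and every `λ`-dependent term of the zero-curvature expression cancels. What
remains is `-∂ₓ²A - i ∂ₜQ + ½ [Q, [A, Q]]`, because `[A, ∂ₓQ] = [∂ₓA, Q]`: the two sides differ
by the corner terms `[E, ∂ₓE]` and `[F, ∂ₓF]`, which vanish since `s₀` is symmetric for odd `n`.
As `s₀` is also an involution, `[Q, [A, Q]]` is again a potential `Q(·, ·)`, so the whole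
expression is `-Q(NLS_q, NLS_p)`, and `Q(u, v) = 0` only for `u = v = 0`.
-/

open Matrix

noncomputable section

/-- The `n×n` matrix `s₀` with `(s₀)_{s,n+1−s} = (−1)^{s+1}` (1-indexed). -/
def s0mat (n : ℕ) : Matrix (Fin n) (Fin n) ℂ :=
  Matrix.of fun i j => if (i : ℕ) + (j : ℕ) + 1 = n then (-1 : ℂ) ^ (i : ℕ) else 0

/-- The Cartan element `J = diag(1, 0, …, 0, −1)` on the `(1,n,1)`-block index type. -/
def Jdiag (n : ℕ) : Matrix (Fin 1 ⊕ Fin n ⊕ Fin 1) (Fin 1 ⊕ Fin n ⊕ Fin 1) ℂ :=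
  Matrix.diagonal (Sum.elim (fun _ => 1) (Sum.elim (fun _ => 0) fun _ => -1))

/-- The BD.I potential `Q = [[0, qᵀ, 0], [p, 0ₙ, s₀q], [0, pᵀs₀, 0]]` in `(1,n,1)` block
form. -/
def Qpot (n : ℕ) (q p : Fin n → ℂ) :
    Matrix (Fin 1 ⊕ Fin n ⊕ Fin 1) (Fin 1 ⊕ Fin n ⊕ Fin 1) ℂ :=
  Matrix.of fun i j =>
    match i, j with
    | .inl _, .inr (.inl k) => q k
    | .inr (.inl k), .inl _ => p k
    | .inr (.inl k), .inr (.inr _) => (s0mat n *ᵥ q) k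
    | .inr (.inr _), .inr (.inl k) => (p ᵥ* s0mat n) k
    | _, _ => 0

/-- The matrix `A = ad_J⁻¹ Q = [[0, qᵀ, 0], [−p, 0ₙ, s₀q], [0, −pᵀs₀, 0]]`, so that
`[J, A] = Q`. -/
def Apot (n : ℕ) (q p : Fin n → ℂ) :
    Matrix (Fin 1 ⊕ Fin n ⊕ Fin 1) (Fin 1 ⊕ Fin n ⊕ Fin 1) ℂ :=
  Qpot n q (-p)

/-- `V₀ = i ∂ₓA + (1/2)(A Q − Q A)`, evaluated at `(x, t)`. -/
def V0pot (n : ℕ) (q p : ℝ → ℝ → Fin n → ℂ) (x t : ℝ) :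
    Matrix (Fin 1 ⊕ Fin n ⊕ Fin 1) (Fin 1 ⊕ Fin n ⊕ Fin 1) ℂ :=
  Complex.I • (Matrix.of fun i j => deriv (fun y => Apot n (q y t) (p y t) i j) x)
    + (2⁻¹ : ℂ) • (Apot n (q x t) (p x t) * Qpot n (q x t) (p x t)
        - Qpot n (q x t) (p x t) * Apot n (q x t) (p x t))

section Blocks

variable {ι α : Type*} [CommRing α]

def upperBlocks (u w : ι → α) : Matrix (Fin 1 ⊕ ι ⊕ Fin 1) (Fin 1 ⊕ ι ⊕ Fin 1) α :=
  Matrix.of fun i j =>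
    match i, j with
    | .inl _, .inr (.inl k) => u k
    | .inr (.inl k), .inr (.inr _) => w k
    | _, _ => 0

def lowerBlocks (u w : ι → α) : Matrix (Fin 1 ⊕ ι ⊕ Fin 1) (Fin 1 ⊕ ι ⊕ Fin 1) α :=
  Matrix.of fun i j =>
    match i, j with
    | .inr (.inl k), .inl _ => u k
    | .inr (.inr _), .inr (.inl k) => w k
    | _, _ => 0

def diagBlocks (a : α) (M : Matrix ι ι α) (b : α) :
    Matrix (Fin 1 ⊕ ι ⊕ Fin 1) (Fin 1 ⊕ ι ⊕ Fin 1) α :=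
  Matrix.of fun i j =>
    match i, j with
    | .inl _, .inl _ => a
    | .inr (.inl k), .inr (.inl l) => M k l
    | .inr (.inr _), .inr (.inr _) => b
    | _, _ => 0

theorem upperBlocks_neg (u w : ι → α) : upperBlocks (-u) (-w) = -upperBlocks u w := by
  ext (i | i | i) (j | j | j) <;> simp [upperBlocks]

theorem upperBlocks_sub (u w u' w' : ι → α) :
    upperBlocks u w - upperBlocks u' w' = upperBlocks (u - u') (w - w') := by
  ext (i | i | i) (j | j | j) <;> simp [upperBlocks]

theorem lowerBlocks_sub (u w u' w' : ι → α) :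
    lowerBlocks u w - lowerBlocks u' w' = lowerBlocks (u - u') (w - w') := by
  ext (i | i | i) (j | j | j) <;> simp [lowerBlocks]

theorem diagBlocks_sub (a a' b b' : α) (M M' : Matrix ι ι α) :
    diagBlocks a M b - diagBlocks a' M' b' = diagBlocks (a - a') (M - M') (b - b') := by
  ext (i | i | i) (j | j | j) <;> simp [diagBlocks]

variable [Fintype ι]

theorem upperBlocks_mul_lowerBlocks (u w u' w' : ι → α) :
    upperBlocks u w * lowerBlocks u' w' = diagBlocks (u ⬝ᵥ u') (vecMulVec w w') 0 := by
  ext (i | i | i) (j | j | j) <;>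
    simp [upperBlocks, lowerBlocks, diagBlocks, mul_apply, Fintype.sum_sum_type, dotProduct,
      vecMulVec]

theorem lowerBlocks_mul_upperBlocks (u w u' w' : ι → α) :
    lowerBlocks u' w' * upperBlocks u w = diagBlocks 0 (vecMulVec u' u) (w' ⬝ᵥ w) := by
  ext (i | i | i) (j | j | j) <;>
    simp [upperBlocks, lowerBlocks, diagBlocks, mul_apply, Fintype.sum_sum_type, dotProduct,
      vecMulVec]

theorem upperBlocks_mul_diagBlocks (u w : ι → α) (a b : α) (M : Matrix ι ι α) :
    upperBlocks u w * diagBlocks a M b = upperBlocks (u ᵥ* M) (b • w) := by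
  ext (i | i | i) (j | j | j) <;>
    simp [upperBlocks, diagBlocks, mul_apply, Fintype.sum_sum_type, vecMul, dotProduct, mul_comm]

theorem diagBlocks_mul_upperBlocks (u w : ι → α) (a b : α) (M : Matrix ι ι α) :
    diagBlocks a M b * upperBlocks u w = upperBlocks (a • u) (M *ᵥ w) := by
  ext (i | i | i) (j | j | j) <;>
    simp [upperBlocks, diagBlocks, mul_apply, Fintype.sum_sum_type, mulVec, dotProduct]

theorem lowerBlocks_mul_diagBlocks (u w : ι → α) (a b : α) (M : Matrix ι ι α) :
    lowerBlocks u w * diagBlocks a M b = lowerBlocks (a • u) (w ᵥ* M) := by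
  ext (i | i | i) (j | j | j) <;>
    simp [lowerBlocks, diagBlocks, mul_apply, Fintype.sum_sum_type, vecMul, dotProduct, mul_comm]

theorem diagBlocks_mul_lowerBlocks (u w : ι → α) (a b : α) (M : Matrix ι ι α) :
    diagBlocks a M b * lowerBlocks u w = lowerBlocks (M *ᵥ u) (b • w) := by
  ext (i | i | i) (j | j | j) <;>
    simp [lowerBlocks, diagBlocks, mul_apply, Fintype.sum_sum_type, mulVec, dotProduct, mul_comm]

theorem commute_upperBlocks {u w u' w' : ι → α} (h : u ⬝ᵥ w' = u' ⬝ᵥ w) :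
    Commute (upperBlocks u w) (upperBlocks u' w') := by
  ext (i | i | i) (j | j | j) <;> simp [upperBlocks, mul_apply, Fintype.sum_sum_type]
  exact h

theorem commute_lowerBlocks {u w u' w' : ι → α} (h : w ⬝ᵥ u' = w' ⬝ᵥ u) :
    Commute (lowerBlocks u w) (lowerBlocks u' w') := by
  ext (i | i | i) (j | j | j) <;> simp [lowerBlocks, mul_apply, Fintype.sum_sum_type]
  exact h

theorem upperBlocks_add_lowerBlocks_lie_diagBlocks (u w u' w' : ι → α) (a b : α)
    (M : Matrix ι ι α) :
    ⁅upperBlocks u w + lowerBlocks u' w', diagBlocks a M b⁆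
      = upperBlocks (u ᵥ* M - a • u) (b • w - M *ᵥ w)
        + lowerBlocks (a • u' - M *ᵥ u') (w' ᵥ* M - b • w') := by
  rw [Ring.lie_def, add_mul, mul_add, upperBlocks_mul_diagBlocks, diagBlocks_mul_upperBlocks,
    lowerBlocks_mul_diagBlocks, diagBlocks_mul_lowerBlocks, ← upperBlocks_sub, ← lowerBlocks_sub]
  abel

end Blocks

section S0

variable {n : ℕ}

theorem s0mat_transpose (hn : Odd n) : (s0mat n)ᵀ = s0mat n := by
  ext i j
  simp only [transpose_apply, s0mat, of_apply]
  by_cases h : (i : ℕ) + j + 1 = n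
  · rw [if_pos (by omega), if_pos h, neg_one_pow_eq_pow_mod_two (R := ℂ) (n := (j : ℕ)),
      neg_one_pow_eq_pow_mod_two (R := ℂ) (n := (i : ℕ))]
    obtain ⟨r, rfl⟩ := hn
    congr 1
    omega
  · rw [if_neg (by omega), if_neg h]

theorem s0mat_mul_self (hn : Odd n) : s0mat n * s0mat n = 1 := by
  have hrev : ∀ i j : Fin n, (i : ℕ) + j + 1 = n ↔ j = i.rev := fun i j => by
    rw [Fin.ext_iff, Fin.val_rev]; omega
  ext i k
  simp only [mul_apply, s0mat, of_apply, hrev, ite_mul, zero_mul, Finset.sum_ite_eq',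
    Finset.mem_univ, if_true, Fin.rev_rev, one_apply]
  by_cases h : k = i
  · subst h
    rw [if_pos rfl, if_pos rfl, ← pow_add]
    obtain ⟨r, rfl⟩ := hn
    rw [Fin.val_rev, show (k : ℕ) + (2 * r + 1 - (k + 1)) = 2 * r by omega, pow_mul]
    norm_num
  · rw [if_neg h, if_neg (Ne.symm h), mul_zero]

theorem vecMul_s0mat (hn : Odd n) (v : Fin n → ℂ) : v ᵥ* s0mat n = s0mat n *ᵥ v := by
  rw [← mulVec_transpose, s0mat_transpose hn]

theorem s0mat_mulVec_s0mat_mulVec (hn : Odd n) (v : Fin n → ℂ) :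
    s0mat n *ᵥ s0mat n *ᵥ v = v := by
  rw [mulVec_mulVec, s0mat_mul_self hn, one_mulVec]

theorem dotProduct_s0mat_mulVec_comm (hn : Odd n) (u v : Fin n → ℂ) :
    u ⬝ᵥ s0mat n *ᵥ v = v ⬝ᵥ s0mat n *ᵥ u := by
  rw [dotProduct_mulVec, vecMul_s0mat hn, dotProduct_comm]

theorem s0mat_mulVec_dotProduct_s0mat_mulVec (hn : Odd n) (u v : Fin n → ℂ) :
    s0mat n *ᵥ u ⬝ᵥ s0mat n *ᵥ v = u ⬝ᵥ v := by
  rw [dotProduct_mulVec, vecMul_s0mat hn, s0mat_mulVec_s0mat_mulVec hn]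

end S0

section Potentials

variable {n : ℕ}

theorem Qpot_add (q p q' p' : Fin n → ℂ) :
    Qpot n (q + q') (p + p') = Qpot n q p + Qpot n q' p' := by
  ext (i | i | i) (j | j | j) <;> simp [Qpot, mulVec_add, add_vecMul]

theorem Qpot_smul (c : ℂ) (q p : Fin n → ℂ) : Qpot n (c • q) (c • p) = c • Qpot n q p := by
  ext (i | i | i) (j | j | j) <;> simp [Qpot, mulVec_smul, smul_vecMul]

theorem Qpot_neg (q p : Fin n → ℂ) : Qpot n (-q) (-p) = -Qpot n q p := by
  simpa using Qpot_smul (-1) q p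

theorem Qpot_sub (q p q' p' : Fin n → ℂ) :
    Qpot n (q - q') (p - p') = Qpot n q p - Qpot n q' p' := by
  simp only [sub_eq_add_neg, Qpot_add, Qpot_neg]

theorem Qpot_eq_zero_iff {q p : Fin n → ℂ} : Qpot n q p = 0 ↔ q = 0 ∧ p = 0 := by
  refine ⟨fun h => ⟨funext fun k => ?_, funext fun k => ?_⟩, fun h => ?_⟩
  · simpa [Qpot] using congrFun₂ h (.inl 0) (.inr (.inl k))
  · simpa [Qpot] using congrFun₂ h (.inr (.inl k)) (.inl 0)
  · ext (i | i | i) (j | j | j) <;> simp [Qpot, h.1, h.2]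

theorem Qpot_eq_upperBlocks_add_lowerBlocks (q p : Fin n → ℂ) :
    Qpot n q p = upperBlocks q (s0mat n *ᵥ q) + lowerBlocks p (p ᵥ* s0mat n) := by
  ext (i | i | i) (j | j | j) <;> simp [Qpot, upperBlocks, lowerBlocks]

theorem Apot_eq_upperBlocks_sub_lowerBlocks (q p : Fin n → ℂ) :
    Apot n q p = upperBlocks q (s0mat n *ᵥ q) - lowerBlocks p (p ᵥ* s0mat n) := by
  ext (i | i | i) (j | j | j) <;> simp [Apot, Qpot, upperBlocks, lowerBlocks, neg_vecMul]

theorem Jdiag_eq_diagBlocks : Jdiag n = diagBlocks 1 0 (-1) := by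
  ext (i | i | i) (j | j | j) <;> simp [Jdiag, diagBlocks, diagonal_apply, Fin.fin_one_eq_zero]

theorem lie_Jdiag_Qpot (q p : Fin n → ℂ) : ⁅Jdiag n, Qpot n q p⁆ = Apot n q p := by
  rw [Ring.lie_def, ← neg_sub, ← Ring.lie_def, Qpot_eq_upperBlocks_add_lowerBlocks,
    Jdiag_eq_diagBlocks, upperBlocks_add_lowerBlocks_lie_diagBlocks,
    Apot_eq_upperBlocks_sub_lowerBlocks]
  simp only [sub_zero, zero_sub, one_smul, zero_mulVec, vecMul_zero, neg_smul, neg_neg,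
    upperBlocks_neg, neg_add_rev]
  abel

theorem lie_Jdiag_Apot (q p : Fin n → ℂ) : ⁅Jdiag n, Apot n q p⁆ = Qpot n q p := by
  simpa [Apot] using lie_Jdiag_Qpot q (-p)

theorem lie_Apot_Qpot_comm (hn : Odd n) (u u' v v' : Fin n → ℂ) :
    ⁅Apot n u u', Qpot n v v'⁆ = ⁅Apot n v v', Qpot n u u'⁆ := by
  set Eu := upperBlocks u (s0mat n *ᵥ u)
  set Ev := upperBlocks v (s0mat n *ᵥ v)
  set Fu := lowerBlocks u' (u' ᵥ* s0mat n)
  set Fv := lowerBlocks v' (v' ᵥ* s0mat n)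
  have hE : ⁅Eu, Ev⁆ = 0 := (commute_upperBlocks (dotProduct_s0mat_mulVec_comm hn u v)).lie_eq
  have hF : ⁅Fu, Fv⁆ = 0 := by
    refine (commute_lowerBlocks ?_).lie_eq
    rw [vecMul_s0mat hn, vecMul_s0mat hn, dotProduct_comm, dotProduct_s0mat_mulVec_comm hn,
      dotProduct_comm]
  rw [← sub_eq_zero, Apot_eq_upperBlocks_sub_lowerBlocks, Qpot_eq_upperBlocks_add_lowerBlocks,
    Apot_eq_upperBlocks_sub_lowerBlocks, Qpot_eq_upperBlocks_add_lowerBlocks]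
  calc _ = (2 : ℤ) • (⁅Eu, Ev⁆ - ⁅Fu, Fv⁆) := by simp only [Ring.lie_def]; noncomm_ring
    _ = 0 := by rw [hE, hF, sub_zero, smul_zero]

theorem lie_Qpot_lie_Apot_Qpot (hn : Odd n) (q p : Fin n → ℂ) :
    ⁅Qpot n q p, ⁅Apot n q p, Qpot n q p⁆⁆ = (2 : ℂ) • Qpot n
      ((q ⬝ᵥ s0mat n *ᵥ q) • s0mat n *ᵥ p - (2 * (q ⬝ᵥ p)) • q)
      ((2 * (q ⬝ᵥ p)) • p - (p ⬝ᵥ s0mat n *ᵥ p) • s0mat n *ᵥ q) := by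
  set E := upperBlocks q (s0mat n *ᵥ q)
  set F := lowerBlocks p (p ᵥ* s0mat n)
  have hEF : ⁅E, F⁆ = diagBlocks (q ⬝ᵥ p)
      (vecMulVec (s0mat n *ᵥ q) (s0mat n *ᵥ p) - vecMulVec p q) (-(q ⬝ᵥ p)) := by
    rw [Ring.lie_def, upperBlocks_mul_lowerBlocks, lowerBlocks_mul_upperBlocks, diagBlocks_sub,
      vecMul_s0mat hn, s0mat_mulVec_dotProduct_s0mat_mulVec hn, dotProduct_comm p, zero_sub,
      sub_zero]
  have hAQ : ⁅E - F, E + F⁆ = (2 : ℂ) • ⁅E, F⁆ := by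
    rw [two_smul]
    simp only [Ring.lie_def]
    noncomm_ring
  have lie_two_smul : ∀ X Y : Matrix (Fin 1 ⊕ Fin n ⊕ Fin 1) (Fin 1 ⊕ Fin n ⊕ Fin 1) ℂ,
      ⁅X, (2 : ℂ) • Y⁆ = (2 : ℂ) • ⁅X, Y⁆ := fun X Y => by
    simp only [Ring.lie_def, mul_smul_comm, smul_mul_assoc, smul_sub]
  rw [Apot_eq_upperBlocks_sub_lowerBlocks, Qpot_eq_upperBlocks_add_lowerBlocks, hAQ,
    lie_two_smul, hEF, upperBlocks_add_lowerBlocks_lie_diagBlocks,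
    Qpot_eq_upperBlocks_add_lowerBlocks]
  congr 3 <;>
    simp only [sub_mulVec, vecMul_sub, vecMulVec_mulVec, vecMul_vecMulVec, mulVec_sub,
      mulVec_smul, op_smul_eq_smul, vecMul_s0mat hn, s0mat_mulVec_s0mat_mulVec hn,
      s0mat_mulVec_dotProduct_s0mat_mulVec hn, dotProduct_comm p q,
      dotProduct_comm (s0mat n *ᵥ p) p] <;>
    module

end Potentials

section EntrywiseDeriv

variable {𝕜 𝔸 m n : Type*} [NontriviallyNormedField 𝕜] [NormedRing 𝔸] [NormedAlgebra 𝕜 𝔸]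

def HasEntrywiseDerivAt (M : 𝕜 → Matrix m n 𝔸) (M' : Matrix m n 𝔸) (x : 𝕜) : Prop :=
  ∀ i j, HasDerivAt (fun y => M y i j) (M' i j) x

namespace HasEntrywiseDerivAt

variable {M N : 𝕜 → Matrix m n 𝔸} {M' N' : Matrix m n 𝔸} {x : 𝕜}

theorem of_deriv_eq (hM : HasEntrywiseDerivAt M M' x) :
    Matrix.of (fun i j => deriv (fun y => M y i j) x) = M' :=
  Matrix.ext fun i j => (hM i j).deriv

theorem add (hM : HasEntrywiseDerivAt M M' x) (hN : HasEntrywiseDerivAt N N' x) :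
    HasEntrywiseDerivAt (fun y => M y + N y) (M' + N') x :=
  fun i j => (hM i j).add (hN i j)

theorem sub (hM : HasEntrywiseDerivAt M M' x) (hN : HasEntrywiseDerivAt N N' x) :
    HasEntrywiseDerivAt (fun y => M y - N y) (M' - N') x :=
  fun i j => (hM i j).sub (hN i j)

theorem const_smul (c : 𝔸) (hM : HasEntrywiseDerivAt M M' x) :
    HasEntrywiseDerivAt (fun y => c • M y) (c • M') x :=
  fun i j => (hM i j).const_mul c

theorem mul [Fintype n] {N : 𝕜 → Matrix n m 𝔸} {N' : Matrix n m 𝔸}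
    (hM : HasEntrywiseDerivAt M M' x) (hN : HasEntrywiseDerivAt N N' x) :
    HasEntrywiseDerivAt (fun y => M y * N y) (M' * N x + M x * N') x := fun i j => by
  simpa only [mul_apply, Matrix.add_apply, ← Finset.sum_add_distrib] using
    HasDerivAt.fun_sum (u := Finset.univ) fun k _ => (hM i k).fun_mul (hN k j)

theorem lie [Fintype m] {M N : 𝕜 → Matrix m m 𝔸} {M' N' : Matrix m m 𝔸}
    (hM : HasEntrywiseDerivAt M M' x) (hN : HasEntrywiseDerivAt N N' x) :
    HasEntrywiseDerivAt (fun y => ⁅M y, N y⁆) (⁅M', N x⁆ + ⁅M x, N'⁆) x := by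
  rw [Ring.lie_def, Ring.lie_def, show M' * N x - N x * M' + (M x * N' - N' * M x)
    = M' * N x + M x * N' - (N' * M x + N x * M') by abel]
  exact (hM.mul hN).sub (hN.mul hM)

end HasEntrywiseDerivAt

end EntrywiseDeriv

theorem hasDerivAt_partials_of_contDiff_two {F : Type*} [NormedAddCommGroup F] [NormedSpace ℝ F]
    {f : ℝ → ℝ → F} (hf : ContDiff ℝ 2 fun xt : ℝ × ℝ => f xt.1 xt.2) (x t : ℝ) :
    HasDerivAt (fun y => f y t) (deriv (fun y => f y t) x) x
      ∧ HasDerivAt (fun y => deriv (fun z => f z t) y)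
          (deriv (fun y => deriv (fun z => f z t) y) x) x
      ∧ HasDerivAt (fun s => f x s) (deriv (fun s => f x s) t) t := by
  have hx : ContDiff ℝ 2 fun y => f y t := hf.comp (contDiff_id.prodMk contDiff_const)
  have ht : ContDiff ℝ 2 fun s => f x s := hf.comp (contDiff_const.prodMk contDiff_id)
  exact ⟨(hx.differentiable two_ne_zero x).hasDerivAt,
    (hx.differentiable_deriv_two x).hasDerivAt, (ht.differentiable two_ne_zero t).hasDerivAt⟩

section PotentialDerivs

variable {n : ℕ} {q p : ℝ → Fin n → ℂ} {q' p' : Fin n → ℂ} {x : ℝ}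

theorem hasEntrywiseDerivAt_Qpot (hq : ∀ k, HasDerivAt (fun y => q y k) (q' k) x)
    (hp : ∀ k, HasDerivAt (fun y => p y k) (p' k) x) :
    HasEntrywiseDerivAt (fun y => Qpot n (q y) (p y)) (Qpot n q' p') x := by
  rintro (i | i | i) (j | j | j)
  all_goals simp only [Qpot, of_apply]
  all_goals first
    | exact hasDerivAt_const _ _
    | exact hq _
    | exact hp _
    | exact HasDerivAt.fun_sum (u := Finset.univ) fun k _ => (hq k).const_mul _
    | exact HasDerivAt.fun_sum (u := Finset.univ) fun k _ => (hp k).mul_const _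

theorem hasEntrywiseDerivAt_Apot (hq : ∀ k, HasDerivAt (fun y => q y k) (q' k) x)
    (hp : ∀ k, HasDerivAt (fun y => p y k) (p' k) x) :
    HasEntrywiseDerivAt (fun y => Apot n (q y) (p y)) (Apot n q' p') x :=
  hasEntrywiseDerivAt_Qpot hq fun k => (hp k).neg

end PotentialDerivs

/-- `Ax`, `Qx`, `Axx`, `Qt` stand for `∂ₓA`, `∂ₓQ`, `∂ₓ²A`, `∂ₜQ`, and the second entry of the
bracket is `V₀ + λQ - λ²J` with `V₀ = i ∂ₓA + ½ [A, Q]`. -/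
theorem lax_compatibility_eq {R : Type*} [Ring R] [Algebra ℂ R] (J A Q Ax Qx Axx Qt : R)
    (lam : ℂ) (hJA : ⁅J, A⁆ = Q) (hJQ : ⁅J, Q⁆ = A) (hJAx : ⁅J, Ax⁆ = Qx)
    (hsymm : ⁅A, Qx⁆ = ⁅Ax, Q⁆) :
    Complex.I • ((Complex.I • Axx + (2⁻¹ : ℂ) • (⁅Ax, Q⁆ + ⁅A, Qx⁆)) + lam • Qx)
      - Complex.I • Qt
      + ⁅Q - lam • J, Complex.I • Ax + (2⁻¹ : ℂ) • ⁅A, Q⁆ + lam • Q - lam ^ 2 • J⁆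
      = -Axx - Complex.I • Qt + (2⁻¹ : ℂ) • ⁅Q, ⁅A, Q⁆⁆ := by
  let _ : LieRing R := LieRing.ofAssociativeRing
  have hJV : ⁅J, ⁅A, Q⁆⁆ = 0 := by
    rw [leibniz_lie, hJA, hJQ, lie_self, lie_self, add_zero]
  rw [hsymm, ← lie_skew Ax Q]
  simp only [sub_lie, lie_add, lie_sub, lie_smul, smul_lie, lie_self, hJAx, hJV, ← lie_skew J Q]
  linear_combination (norm := module) Complex.I_sq • Axx

def zeroCurvature (n : ℕ) (q p : ℝ → ℝ → Fin n → ℂ) (lam : ℂ) (x t : ℝ) :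
    Matrix (Fin 1 ⊕ Fin n ⊕ Fin 1) (Fin 1 ⊕ Fin n ⊕ Fin 1) ℂ :=
  Complex.I • (Matrix.of fun i j =>
      deriv (fun y => (V0pot n q p y t + lam • Qpot n (q y t) (p y t)) i j) x)
    - Complex.I • (Matrix.of fun i j => deriv (fun s => Qpot n (q x s) (p x s) i j) t)
    + ((Qpot n (q x t) (p x t) - lam • Jdiag n)
          * (V0pot n q p x t + lam • Qpot n (q x t) (p x t) - (lam ^ 2) • Jdiag n)
        - (V0pot n q p x t + lam • Qpot n (q x t) (p x t) - (lam ^ 2) • Jdiag n)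
          * (Qpot n (q x t) (p x t) - lam • Jdiag n))

def mnlsQ (n : ℕ) (q p : ℝ → ℝ → Fin n → ℂ) (x t : ℝ) : Fin n → ℂ :=
  Complex.I • (fun j => deriv (fun s => q x s j) t)
    + (fun j => deriv (fun y => deriv (fun z => q z t j) y) x)
    + (2 * (q x t ⬝ᵥ p x t)) • q x t
    - (q x t ⬝ᵥ s0mat n *ᵥ q x t) • (s0mat n *ᵥ p x t)

def mnlsP (n : ℕ) (q p : ℝ → ℝ → Fin n → ℂ) (x t : ℝ) : Fin n → ℂ :=
  Complex.I • (fun j => deriv (fun s => p x s j) t)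
    - (fun j => deriv (fun y => deriv (fun z => p z t j) y) x)
    - (2 * (q x t ⬝ᵥ p x t)) • p x t
    + (p x t ⬝ᵥ s0mat n *ᵥ p x t) • (s0mat n *ᵥ q x t)

theorem zeroCurvature_eq {n : ℕ} (hn : Odd n) {q p : ℝ → ℝ → Fin n → ℂ}
    (hq : ContDiff ℝ 2 fun xt : ℝ × ℝ => q xt.1 xt.2)
    (hp : ContDiff ℝ 2 fun xt : ℝ × ℝ => p xt.1 xt.2) (lam : ℂ) (x t : ℝ) :
    zeroCurvature n q p lam x t = -Qpot n (mnlsQ n q p x t) (mnlsP n q p x t) := by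
  have dq := fun k => hasDerivAt_partials_of_contDiff_two (f := fun y s => q y s k)
    (contDiff_pi.mp hq k)
  have dp := fun k => hasDerivAt_partials_of_contDiff_two (f := fun y s => p y s k)
    (contDiff_pi.mp hp k)
  have hQ : ∀ y, HasEntrywiseDerivAt (fun z => Qpot n (q z t) (p z t))
      (Qpot n (fun k => deriv (fun z => q z t k) y) (fun k => deriv (fun z => p z t k) y)) y :=
    fun y => hasEntrywiseDerivAt_Qpot (fun k => (dq k y t).1) (fun k => (dp k y t).1)
  have hA : ∀ y, HasEntrywiseDerivAt (fun z => Apot n (q z t) (p z t))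
      (Apot n (fun k => deriv (fun z => q z t k) y) (fun k => deriv (fun z => p z t k) y)) y :=
    fun y => hasEntrywiseDerivAt_Apot (fun k => (dq k y t).1) (fun k => (dp k y t).1)
  have hV0 : (fun y => V0pot n q p y t) = fun y =>
      Complex.I • Apot n (fun k => deriv (fun z => q z t k) y) (fun k => deriv (fun z => p z t k) y)
        + (2⁻¹ : ℂ) • ⁅Apot n (q y t) (p y t), Qpot n (q y t) (p y t)⁆ := by
    funext y
    rw [V0pot, (hA y).of_deriv_eq]
    rfl
  have hV0x := ((hasEntrywiseDerivAt_Apot (fun k => (dq k x t).2.1)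
    (fun k => (dp k x t).2.1)).const_smul Complex.I).add (((hA x).lie (hQ x)).const_smul (2⁻¹ : ℂ))
  rw [← hV0] at hV0x
  have hQt := hasEntrywiseDerivAt_Qpot (fun k => (dq k x t).2.2) (fun k => (dp k x t).2.2)
  rw [zeroCurvature, (hV0x.add ((hQ x).const_smul lam)).of_deriv_eq, hQt.of_deriv_eq,
    congrFun hV0 x, ← Ring.lie_def, lax_compatibility_eq _ _ _ _ _ _ _ _ (lie_Jdiag_Apot _ _)
      (lie_Jdiag_Qpot _ _) (lie_Jdiag_Apot _ _) (lie_Apot_Qpot_comm hn _ _ _ _),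
    lie_Qpot_lie_Apot_Qpot hn, inv_smul_smul₀ two_ne_zero, Apot]
  simp only [← Qpot_neg, ← Qpot_smul, ← Qpot_sub, ← Qpot_add]
  congr 1 <;> simp only [mnlsQ, mnlsP] <;> module

/-- the zero-curvature equation
`i ∂ₓ(V₀ + λ V₁) − i ∂ₜ Q + [Q − λJ, V₀ + λ V₁ − λ² J] = 0` (for all `λ`) holds if and only
if `q`, `p` satisfy the multi-component NLS system on the BD.I symmetric space. -/
theorem zero_curvature_iff_mnls (r : ℕ) (q p : ℝ → ℝ → Fin (2 * r + 1) → ℂ)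
    (hq : ContDiff ℝ 2 fun xt : ℝ × ℝ => q xt.1 xt.2)
    (hp : ContDiff ℝ 2 fun xt : ℝ × ℝ => p xt.1 xt.2) :
    (∀ lam : ℂ, ∀ x t : ℝ,
      Complex.I • (Matrix.of fun i j =>
          deriv (fun y => (V0pot (2 * r + 1) q p y t
            + lam • Qpot (2 * r + 1) (q y t) (p y t)) i j) x)
        - Complex.I • (Matrix.of fun i j =>
            deriv (fun s => Qpot (2 * r + 1) (q x s) (p x s) i j) t)
        + ((Qpot (2 * r + 1) (q x t) (p x t) - lam • Jdiag (2 * r + 1))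
              * (V0pot (2 * r + 1) q p x t + lam • Qpot (2 * r + 1) (q x t) (p x t)
                  - (lam ^ 2) • Jdiag (2 * r + 1))
            - (V0pot (2 * r + 1) q p x t + lam • Qpot (2 * r + 1) (q x t) (p x t)
                  - (lam ^ 2) • Jdiag (2 * r + 1))
              * (Qpot (2 * r + 1) (q x t) (p x t) - lam • Jdiag (2 * r + 1))) = 0)
    ↔
    (∀ x t : ℝ,
      (Complex.I • (fun j => deriv (fun s => q x s j) t)
        + (fun j => deriv (fun y => deriv (fun z => q z t j) y) x)
        + (2 * (q x t ⬝ᵥ p x t)) • q x t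
        - (q x t ⬝ᵥ s0mat (2 * r + 1) *ᵥ q x t) • (s0mat (2 * r + 1) *ᵥ p x t) = 0)
      ∧
      (Complex.I • (fun j => deriv (fun s => p x s j) t)
        - (fun j => deriv (fun y => deriv (fun z => p z t j) y) x)
        - (2 * (q x t ⬝ᵥ p x t)) • p x t
        + (p x t ⬝ᵥ s0mat (2 * r + 1) *ᵥ p x t) • (s0mat (2 * r + 1) *ᵥ q x t) = 0)) := by
  change (∀ lam x t, zeroCurvature _ q p lam x t = 0)
    ↔ ∀ x t, mnlsQ _ q p x t = 0 ∧ mnlsP _ q p x t = 0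
  simp only [zeroCurvature_eq (odd_two_mul_add_one r) hq hp, neg_eq_zero, Qpot_eq_zero_iff]
  exact ⟨fun h => h 0, fun h _ => h⟩

end
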